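/- Suppose λ_i, μ_i > 0 for i = 1,…,D+1, s₀ = 0 < s₁ < … < s_D < s_{D+1} = t, and the matching conditions λ_i·e^{−μ_i(t−s_i)} = λ_{i+1}·e^{−μ_{i+1}(t−s_i)} hold for i = 1,…,D. Then for the perturbed value with jump epochs s_i + v_i·ε (v₀ = v_{D+1} = 0), the difference Σ_{i=1}^{D+1} (λ_i/μ_i)e^{−μ_i(t−s_i)}(1−e^{μ_i v_i ε}) − Σ_{i=1}^{D+1} (λ_i/μ_i)e^{−μ_i(t−s_{i-1})}(1−e^{μ_i v_{i-1} ε}) equals Σ_{i=1}^{D} ω_i (v_i ε)² + o(ε²) as ε → 0, where ω_i = (λ_{i+1}/2)(μ_{i+1} − μ_i)e^{−μ_{i+1}(t−s_i)}. -/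

import Mathlib

/-!
Write `aᵢ := λᵢ e^{-μᵢ(t-sᵢ)}`, which by the matching condition also equals `λᵢ₊₁ e^{-μᵢ₊₁(t-sᵢ)}`.
Since `v₀ = v_{D+1} = 0`, the two sums regroup into one term per interior epoch `sᵢ`,
namely `(aᵢ/μᵢ)(1 - e^{μᵢ x}) - (aᵢ/μᵢ₊₁)(1 - e^{μᵢ₊₁ x})` with `x = vᵢ ε`.
Expanding `(1 - e^{μx})/μ = -x - μx²/2 + o(x²)`, the linear parts cancel and what is left is
`(aᵢ/2)(μᵢ₊₁ - μᵢ) x² + o(x²) = ωᵢ (vᵢ ε)² + o(ε²)`.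
-/

open Real Finset Asymptotics Filter Topology

theorem Finset.sum_Icc_diag_sub_sum_Icc_subdiag {M : Type*} [AddCommGroup M] (D : ℕ)
    (h : ℕ → ℕ → M) (h_first : h 1 0 = 0) (h_last : h (D + 1) (D + 1) = 0) :
    ∑ i ∈ Icc 1 (D + 1), h i i - ∑ i ∈ Icc 1 (D + 1), h i (i - 1) =
      ∑ i ∈ Icc 1 D, (h i i - h (i + 1) i) := by
  have h_diag : ∑ i ∈ Icc 1 (D + 1), h i i = ∑ i ∈ Icc 1 D, h i i := by
    rw [sum_Icc_succ_top (by omega), h_last, add_zero]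
  have h_subdiag : ∑ i ∈ Icc 1 (D + 1), h i (i - 1) = ∑ i ∈ Icc 1 D, h (i + 1) i := by
    rw [← map_add_right_Icc 0 D 1, sum_map, Icc_eq_cons_Ioc D.zero_le, sum_cons,
      ← Icc_add_one_left_eq_Ioc]
    simp [h_first]
  rw [h_diag, h_subdiag, sum_sub_distrib]

lemma Asymptotics.IsLittleO.comp_const_mul_sq {E : Type*} [Norm E] {f : ℝ → E}
    (hf : f =o[𝓝 0] fun x => x ^ 2) (c : ℝ) :
    (fun ε => f (c * ε)) =o[𝓝 0] fun ε => ε ^ 2 := by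
  refine (hf.comp_tendsto ((continuous_const_mul c).tendsto' 0 0 (mul_zero c))).trans_isBigO ?_
  simpa [Function.comp_def, mul_pow] using
    (isBigO_refl (fun ε : ℝ => ε ^ 2) (𝓝 0)).const_mul_left (c ^ 2)

lemma Real.one_sub_exp_mul_div_add_isLittleO {μ : ℝ} (hμ : μ ≠ 0) :
    (fun x : ℝ => (1 - exp (μ * x)) / μ + x + μ * x ^ 2 / 2) =o[𝓝 0] fun x => x ^ 2 := by
  have h_taylor := (Real.exp_sub_sum_range_succ_isLittleO_pow 2).comp_const_mul_sq μ
  refine (h_taylor.const_mul_left (-μ⁻¹)).congr_left fun x => ?_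
  simp only [sum_range_succ]
  field_simp
  ring

lemma div_mul_one_sub_exp_sub_div_mul_one_sub_exp_isLittleO {μ₁ μ₂ : ℝ} (h₁ : μ₁ ≠ 0)
    (h₂ : μ₂ ≠ 0) (a c : ℝ) :
    (fun ε : ℝ => a / μ₁ * (1 - exp (μ₁ * (c * ε))) - a / μ₂ * (1 - exp (μ₂ * (c * ε))) -
      a / 2 * (μ₂ - μ₁) * (c * ε) ^ 2) =o[𝓝 0] fun ε => ε ^ 2 := by
  have h := (((one_sub_exp_mul_div_add_isLittleO h₁).sub
    (one_sub_exp_mul_div_add_isLittleO h₂)).comp_const_mul_sq c).const_mul_left a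
  refine h.congr_left fun ε => ?_
  field_simp
  ring

theorem perturbation_second_order_expansion_general (D : ℕ)
    (t : ℝ) (lam mu s v : ℕ → ℝ)
    (hmu : ∀ i ∈ Finset.Icc 1 (D + 1), 0 < mu i)
    (hmatch : ∀ i ∈ Finset.Icc 1 D,
      lam i * exp (-mu i * (t - s i)) = lam (i + 1) * exp (-mu (i + 1) * (t - s i)))
    (hv0 : v 0 = 0) (hvD : v (D + 1) = 0) :
    (fun ε : ℝ =>
        (∑ i ∈ Finset.Icc 1 (D + 1),
            (lam i / mu i) * exp (-mu i * (t - s i)) * (1 - exp (mu i * (v i * ε))) -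
          ∑ i ∈ Finset.Icc 1 (D + 1),
            (lam i / mu i) * exp (-mu i * (t - s (i - 1))) *
              (1 - exp (mu i * (v (i - 1) * ε)))) -
        ∑ i ∈ Finset.Icc 1 D,
          ((lam (i + 1) / 2) * (mu (i + 1) - mu i) * exp (-mu (i + 1) * (t - s i))) *
            (v i * ε) ^ 2)
      =o[nhds (0 : ℝ)] fun ε : ℝ => ε ^ 2 := by
  have h_regroup := fun ε : ℝ => sum_Icc_diag_sub_sum_Icc_subdiag D
    (fun i j => (lam i / mu i) * exp (-mu i * (t - s j)) * (1 - exp (mu i * (v j * ε))))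
    (by simp [hv0]) (by simp [hvD])
  beta_reduce at h_regroup
  simp_rw [h_regroup, ← sum_sub_distrib]
  refine IsLittleO.fun_sum fun i hi => ?_
  have hi₁ : i ∈ Icc 1 (D + 1) := by simp only [mem_Icc] at hi ⊢; omega
  have hi₂ : i + 1 ∈ Icc 1 (D + 1) := by simp only [mem_Icc] at hi ⊢; omega
  refine (div_mul_one_sub_exp_sub_div_mul_one_sub_exp_isLittleO (hmu i hi₁).ne'
    (hmu (i + 1) hi₂).ne' (lam i * exp (-mu i * (t - s i))) (v i)).congr_left fun ε => ?_
  linear_combination (-(1 - exp (mu (i + 1) * (v i * ε))) / mu (i + 1) -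
    (mu (i + 1) - mu i) / 2 * (v i * ε) ^ 2) * hmatch i hi

theorem perturbation_second_order_expansion (D : ℕ) (hD : 1 ≤ D)
    (t : ℝ) (lam mu s v : ℕ → ℝ)
    (hlam : ∀ i ∈ Finset.Icc 1 (D + 1), 0 < lam i)
    (hmu : ∀ i ∈ Finset.Icc 1 (D + 1), 0 < mu i)
    (hs0 : s 0 = 0) (hst : s (D + 1) = t)
    (hmono : ∀ i ∈ Finset.Icc 0 D, s i < s (i + 1))
    (hmatch : ∀ i ∈ Finset.Icc 1 D,
      lam i * exp (-mu i * (t - s i)) = lam (i + 1) * exp (-mu (i + 1) * (t - s i)))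
    (hv0 : v 0 = 0) (hvD : v (D + 1) = 0) :
    (fun ε : ℝ =>
        (∑ i ∈ Finset.Icc 1 (D + 1),
            (lam i / mu i) * exp (-mu i * (t - s i)) * (1 - exp (mu i * (v i * ε))) -
          ∑ i ∈ Finset.Icc 1 (D + 1),
            (lam i / mu i) * exp (-mu i * (t - s (i - 1))) *
              (1 - exp (mu i * (v (i - 1) * ε)))) -
        ∑ i ∈ Finset.Icc 1 D,
          ((lam (i + 1) / 2) * (mu (i + 1) - mu i) * exp (-mu (i + 1) * (t - s i))) *
            (v i * ε) ^ 2)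
      =o[nhds (0 : ℝ)] fun ε : ℝ => ε ^ 2 :=
  perturbation_second_order_expansion_general D t lam mu s v hmu hmatch hv0 hvD
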